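/- Let X and Y be finite sets, H a Hilbert space, ξ ∈ H a unit vector, and let E = (E_{x,x',a,a'})_{x,x',a,a'∈X} and F = (F_{y,y',b,b'})_{y,y',b,b'∈Y} be bistochastic operator matrices over X and over Y respectively, acting on H, such that every E_{x,x',a,a'} commutes with every F_{y,y',b,b'}. Define Γ : M_X⊗M_Y → M_X⊗M_Y by Γ(ε_{x,x'}⊗ε_{y,y'}) = ∑_{a,a'∈X}∑_{b,b'∈Y} ⟨E_{x,x',a,a'}F_{y,y',b,b'}ξ, ξ⟩·ε_{a,a'}⊗ε_{b,b'}. Then: (1) the dual map satisfies Γ^*(ε_{a,a'}⊗ε_{b,b'}) = ∑_{x,x'∈X}∑_{y,y'∈Y} ⟨E_{x,x',a,a'}F_{y,y',b,b'}ξ, ξ⟩·ε_{x,x'}⊗ε_{y,y'}; and (2) the reindexed families Ẽ and F̃, defined by Ẽ_{a,a',x,x'} := E_{x,x',a,a'} and F̃_{b,b',y,y'} := F_{y,y',b,b'}, are again bistochastic operator matrices (over X and Y respectively) with mutually commuting entries, so Γ^* admits a representation of the same form. -/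

import Mathlib

open scoped ComplexOrder
open Matrix

noncomputable section

/-- A bistochastic operator matrix over `X` acting on `H`. -/
def IsBistochasticOpMatrix {X : Type*} [Fintype X] [DecidableEq X]
    {H : Type*} [NormedAddCommGroup H] [InnerProductSpace ℂ H]
    (E : X → X → X → X → (H →L[ℂ] H)) : Prop :=
  (∀ ξ : X × X → H,
      0 ≤ ∑ p : X × X, ∑ q : X × X, (inner ℂ (ξ p) (E p.1 q.1 p.2 q.2 (ξ q)) : ℂ)) ∧
  (∀ x x' : X, ∑ a : X, E x x' a a = if x = x' then (1 : H →L[ℂ] H) else 0) ∧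
  (∀ a a' : X, ∑ x : X, E x x a a' = if a = a' then (1 : H →L[ℂ] H) else 0)

/-- The QNS correlation determined by commuting bistochastic operator matrices `E, F`
and the unit vector `ξ`. -/
def corr2 {X Y : Type*} [Fintype X] [Fintype Y]
    {H : Type*} [NormedAddCommGroup H] [InnerProductSpace ℂ H]
    (E : X → X → X → X → (H →L[ℂ] H)) (F : Y → Y → Y → Y → (H →L[ℂ] H)) (ξ : H)
    (M : Matrix (X × Y) (X × Y) ℂ) : Matrix (X × Y) (X × Y) ℂ :=
  Matrix.of fun r s => ∑ x : X, ∑ x' : X, ∑ y : Y, ∑ y' : Y,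
    M (x, y) (x', y') * (inner ℂ ξ (E x x' r.1 s.1 (F y y' r.2 s.2 ξ)) : ℂ)

/- Pairing with matrix units, the duality relation says that the `(r, s)` entry of
`Γ^*(ε_{k,l})` is the `(k, l)` entry of `Γ(ε_{r,s})`, which is read off the definition of `Γ`.
Swapping the two index pairs of a bistochastic operator matrix exchanges its two marginal
conditions, and its positivity is invariant under the corresponding permutation of `X × X`. -/

theorem Matrix.trace_single_one_mul_transpose {n R : Type*} [Fintype n] [DecidableEq n]
    [CommSemiring R] (i j : n) (M : Matrix n n R) :
    (single i j 1 * Mᵀ).trace = M i j := by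
  simp [trace_single_mul]

theorem Matrix.trace_mul_transpose_single_one {n R : Type*} [Fintype n] [DecidableEq n]
    [CommSemiring R] (M : Matrix n n R) (i j : n) :
    (M * (single i j 1)ᵀ).trace = M i j := by
  rw [transpose_single, trace_mul_single]
  simp

theorem Matrix.apply_single_one_of_trace_dual {n R : Type*} [Fintype n] [DecidableEq n]
    [CommSemiring R] {Φ Ψ : Matrix n n R → Matrix n n R}
    (hdual : ∀ ρ σ, (Φ ρ * σᵀ).trace = (ρ * (Ψ σ)ᵀ).trace) (i j k l : n) :
    Ψ (single k l 1) i j = Φ (single i j 1) k l := by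
  rw [← trace_single_one_mul_transpose i j (Ψ _), ← hdual, trace_mul_transpose_single_one]

theorem corr2_single_one_apply {X Y : Type*} [Fintype X] [DecidableEq X] [Fintype Y]
    [DecidableEq Y] {H : Type*} [NormedAddCommGroup H] [InnerProductSpace ℂ H]
    (E : X → X → X → X → (H →L[ℂ] H)) (F : Y → Y → Y → Y → (H →L[ℂ] H)) (ξ : H)
    (r s t u : X × Y) :
    corr2 E F ξ (single r s 1) t u = inner ℂ ξ (E r.1 s.1 t.1 u.1 (F r.2 s.2 t.2 u.2 ξ)) := by
  obtain ⟨x, y⟩ := r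
  obtain ⟨x', y'⟩ := s
  simp [corr2, single_apply, ite_and]

theorem IsBistochasticOpMatrix.swap {X : Type*} [Fintype X] [DecidableEq X]
    {H : Type*} [NormedAddCommGroup H] [InnerProductSpace ℂ H]
    {E : X → X → X → X → (H →L[ℂ] H)} (hE : IsBistochasticOpMatrix E) :
    IsBistochasticOpMatrix (fun a a' x x' => E x x' a a') := by
  refine ⟨fun ζ => ?_, hE.2.2, hE.2.1⟩
  refine (hE.1 (ζ ∘ Prod.swap)).trans_eq ?_
  exact Fintype.sum_equiv (Equiv.prodComm X X) _ _ fun p =>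
    Fintype.sum_equiv (Equiv.prodComm X X) _ _ fun q => rfl

theorem dual_of_qc_correlation_general
    {X Y : Type*} [Fintype X] [DecidableEq X] [Fintype Y] [DecidableEq Y]
    {H : Type*} [NormedAddCommGroup H] [InnerProductSpace ℂ H]
    (ξ : H)
    (E : X → X → X → X → (H →L[ℂ] H)) (F : Y → Y → Y → Y → (H →L[ℂ] H))
    (hE : IsBistochasticOpMatrix E) (hF : IsBistochasticOpMatrix F)
    (hcomm : ∀ (x x' a a' : X) (y y' b b' : Y), Commute (E x x' a a') (F y y' b b'))
    (Δ : Matrix (X × Y) (X × Y) ℂ → Matrix (X × Y) (X × Y) ℂ)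
    (hdual : ∀ ρ σ : Matrix (X × Y) (X × Y) ℂ,
      ((corr2 E F ξ ρ) * σᵀ).trace = (ρ * (Δ σ)ᵀ).trace) :
    (∀ (a a' : X) (b b' : Y),
      Δ (Matrix.single (a, b) (a', b') 1) =
        Matrix.of fun r s => (inner ℂ ξ (E r.1 s.1 a a' (F r.2 s.2 b b' ξ)) : ℂ)) ∧
    IsBistochasticOpMatrix (fun a a' x x' => E x x' a a') ∧
    IsBistochasticOpMatrix (fun b b' y y' => F y y' b b') ∧
    (∀ (a a' x x' : X) (b b' y y' : Y),
      Commute ((fun a a' x x' => E x x' a a') a a' x x')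
        ((fun b b' y y' => F y y' b b') b b' y y')) := by
  refine ⟨fun a a' b b' => ?_, hE.swap, hF.swap,
    fun a a' x x' b b' y y' => hcomm x x' a a' y y' b b'⟩
  ext r s
  rw [apply_single_one_of_trace_dual hdual, corr2_single_one_apply]
  rfl

/-- The dual of the QNS correlation built from commuting bistochastic
operator matrices `E` and `F` is again of the same form, for the reindexed bistochastic
operator matrices `Ẽ_{a,a',x,x'} = E_{x,x',a,a'}` and `F̃_{b,b',y,y'} = F_{y,y',b,b'}`. -/
theorem dual_of_qc_correlation
    {X Y : Type*} [Fintype X] [DecidableEq X] [Fintype Y] [DecidableEq Y]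
    {H : Type*} [NormedAddCommGroup H] [InnerProductSpace ℂ H] [CompleteSpace H]
    (ξ : H) (hξ : ‖ξ‖ = 1)
    (E : X → X → X → X → (H →L[ℂ] H)) (F : Y → Y → Y → Y → (H →L[ℂ] H))
    (hE : IsBistochasticOpMatrix E) (hF : IsBistochasticOpMatrix F)
    (hcomm : ∀ (x x' a a' : X) (y y' b b' : Y), Commute (E x x' a a') (F y y' b b'))
    (Δ : Matrix (X × Y) (X × Y) ℂ → Matrix (X × Y) (X × Y) ℂ)
    (hdual : ∀ ρ σ : Matrix (X × Y) (X × Y) ℂ,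
      ((corr2 E F ξ ρ) * σᵀ).trace = (ρ * (Δ σ)ᵀ).trace) :
    (∀ (a a' : X) (b b' : Y),
      Δ (Matrix.single (a, b) (a', b') 1) =
        Matrix.of fun r s => (inner ℂ ξ (E r.1 s.1 a a' (F r.2 s.2 b b' ξ)) : ℂ)) ∧
    IsBistochasticOpMatrix (fun a a' x x' => E x x' a a') ∧
    IsBistochasticOpMatrix (fun b b' y y' => F y y' b b') ∧
    (∀ (a a' x x' : X) (b b' y y' : Y),
      Commute ((fun a a' x x' => E x x' a a') a a' x x')
        ((fun b b' y y' => F y y' b b') b b' y y')) :=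
  dual_of_qc_correlation_general ξ E F hE hF hcomm Δ hdual
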